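/- arXiv:2506.03701 — 3 statements merged into one kernel-verified Lean document; each statement's English description precedes it below -/
import Mathlib

section
/- Let f and e be the binary reduction and error-count functions (f exhaustively removes prefix '11' and substrings '011' from a binary string; e counts removals). Define the potential Φ(s) = r − |f(s)| + 3(k − e(s)). Then for every binary string s and every bit b ∈ {0,1}, Φ(s·b) ≤ Φ(s) − 1. Consequently, every binary string s with |f(s)| ≤ r and e(s) ≤ k has length |s| ≤ r + 3k, so the tournament tree T_{n,k} constructed from these labels has height at most r + 3k. -/
/-- One step of the binary reduction together with the error count:
appending `0` appends it to the reduced string; appending `1` appends it if the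
reduced string does not end with `1`, and otherwise removes the trailing `1`
(together with the preceding `0`, if present) and increments the error count. -/
def bstep : List Bool × ℕ → Bool → List Bool × ℕ
  | (acc, m), false => (acc ++ [false], m)
  | (acc, m), true =>
    if acc.getLast? = some true then
      (if acc.dropLast.getLast? = some false then acc.dropLast.dropLast else acc.dropLast, m + 1)
    else (acc ++ [true], m)

def bF (s : List Bool) : List Bool × ℕ := s.foldl bstep ([], 0)

/-- The binary reduction function `f`: exhaustively removes the prefix `11` and substrings `011`. -/
def bf (s : List Bool) : List Bool := (bF s).1

/-- The error-count function `e`: counts the removals performed by `f`. -/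
def be (s : List Bool) : ℕ := (bF s).2

/-- The potential `Φ(s) = r − |f(s)| + 3(k − e(s))`. -/
def Phi (r k : ℕ) (s : List Bool) : ℤ :=
  (r : ℤ) - (bf s).length + 3 * ((k : ℤ) - be s)

/-! The potential is `r + 3 k` minus the weight `|f(s)| + 3 e(s)` of the reduction state. Every
step raises this weight: appending a bit either lengthens the reduced string, or removes at most
two symbols while paying one error, worth three. Starting from weight `0`, the weight of `s` is
therefore at least `|s|`, and it is at most `r + 3 k` in the tree. -/

def weight (p : List Bool × ℕ) : ℕ := p.1.length + 3 * p.2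

lemma weight_lt_weight_bstep (p : List Bool × ℕ) (b : Bool) : weight p < weight (bstep p b) := by
  obtain ⟨acc, m⟩ := p
  cases b
  · simp [bstep, weight]
  · simp only [bstep, weight]
    split_ifs <;> simp only [List.length_append, List.length_singleton, List.length_dropLast] <;>
      omega

lemma bF_append_singleton (s : List Bool) (b : Bool) : bF (s ++ [b]) = bstep (bF s) b := by
  simp [bF, List.foldl_append]

lemma Phi_eq (r k : ℕ) (s : List Bool) : Phi r k s = r + 3 * k - weight (bF s) := by
  simp only [Phi, bf, be, weight]
  push_cast
  ring

lemma length_le_weight_bF (s : List Bool) : s.length ≤ weight (bF s) := by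
  induction s using List.reverseRecOn with
  | nil => exact Nat.zero_le _
  | append_singleton t b ih =>
    rw [bF_append_singleton, List.length_append, List.length_singleton]
    exact Nat.succ_le_of_lt (ih.trans_lt (weight_lt_weight_bstep _ b))

theorem binary_tree_height (r k : ℕ) :
    (∀ (s : List Bool) (b : Bool), Phi r k (s ++ [b]) ≤ Phi r k s - 1) ∧
    (∀ s : List Bool, (bf s).length ≤ r → be s ≤ k → s.length ≤ r + 3 * k) := by
  constructor
  · intro s b
    have := weight_lt_weight_bstep (bF s) b
    rw [Phi_eq, Phi_eq, bF_append_singleton]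
    omega
  · intro s hf he
    have hweight : weight (bF s) ≤ r + 3 * k := add_le_add hf (Nat.mul_le_mul_left 3 he)
    exact (length_le_weight_bF s).trans hweight
end

section
/- For every binary string s, the reduced string f(s) (obtained by exhaustively removing the prefix '11' and all substrings '011') contains no two consecutive ones. -/
/- A reduction step either deletes a suffix, which cannot create a `11`, or appends a bit, and it
appends `1` only to a string that does not end in `1`. -/
lemma isChain_bstep {p : List Bool × ℕ} (h : p.1.IsChain fun a b => ¬(a = true ∧ b = true))
    (a : Bool) : (bstep p a).1.IsChain fun a b => ¬(a = true ∧ b = true) := by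
  obtain ⟨acc, m⟩ := p
  cases a with
  | false => exact h.append (.singleton _) (by simp)
  | true =>
    simp only [bstep]
    split_ifs with hlast
    · exact h.prefix (acc.dropLast.dropLast_prefix.trans acc.dropLast_prefix)
    · exact h.prefix acc.dropLast_prefix
    · exact h.append (.singleton _) (by rintro x hx _ - ⟨rfl, -⟩; exact hlast hx)

theorem bf_no_consecutive_ones (s : List Bool) :
    List.Chain' (fun a b => ¬(a = true ∧ b = true)) (bf s) :=
  List.foldlRecOn (motive := fun p => p.1.IsChain fun a b => ¬(a = true ∧ b = true))
    s bstep List.isChain_nil fun _ hp a _ => isChain_bstep hp a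
end

section
/- In the binary reduction setting with p_ℓ as defined, for every binary string s and ℓ ≥ 1, p_ℓ(f(s)) is a prefix of p_{ℓ−1}(f(s)). -/
/-- `p_ℓ(f(s))`, defined as `f(s·1^{ℓ'})` for the minimal `ℓ'` with
`e(s·1^{ℓ'}) = e(s) + ℓ` or `f(s·1^{ℓ'}) = ε`. -/
noncomputable def bp (ℓ : ℕ) (s : List Bool) : List Bool :=
  bf (s ++ List.replicate
    (sInf {m : ℕ | be (s ++ List.replicate m true) = be s + ℓ ∨
      bf (s ++ List.replicate m true) = []}) true)

lemma bF_append (s t : List Bool) : bF (s ++ t) = t.foldl bstep (bF s) := by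
  simp [bF, List.foldl_append]

lemma bF_snoc_true (s : List Bool) (m : ℕ) :
    bF (s ++ List.replicate (m+1) true) = bstep (bF (s ++ List.replicate m true)) true := by
  rw [List.replicate_succ', ← List.append_assoc, bF_append]
  rfl

lemma bstep_last_true (u : List Bool) (k : ℕ) (h : u.getLast? = some true) :
    (bstep (u, k) true).1 <+: u ∧ (bstep (u, k) true).2 = k + 1 := by
  simp only [bstep, h, if_pos]
  split
  · exact ⟨(List.dropLast_prefix _).trans (List.dropLast_prefix _), trivial⟩
  · exact ⟨List.dropLast_prefix _, trivial⟩

lemma bstep_last_not_true (u : List Bool) (k : ℕ) (h : ¬ u.getLast? = some true) :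
    bstep (u, k) true = (u ++ [true], k) := by
  simp [bstep, h]

lemma bstep_snoc (u : List Bool) (k : ℕ) : (bstep (u ++ [true], k) true).1 <+: u := by
  have h : (u ++ [true]).getLast? = some true := by simp
  simp only [bstep, h, if_pos, List.dropLast_concat]
  split
  · exact List.dropLast_prefix u
  · exact List.prefix_refl u

lemma nat_ivt (a : ℕ → ℕ) (h : ∀ n, a (n+1) = a n ∨ a (n+1) = a n + 1)
    (c : ℕ) (h1 : a 0 ≤ c) : ∀ n, c ≤ a n → ∃ m, m ≤ n ∧ a m = c := by
  intro n
  induction n with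
  | zero => intro h2; exact ⟨0, le_refl _, le_antisymm h1 h2⟩
  | succ n ih =>
    intro h2
    by_cases hc : c ≤ a n
    · obtain ⟨m, hm, hma⟩ := ih hc
      exact ⟨m, hm.trans (Nat.le_succ n), hma⟩
    · push_neg at hc
      rcases h n with h' | h'
      · exact absurd (h' ▸ h2) (not_le.mpr hc)
      · exact ⟨n + 1, le_refl _, by omega⟩

theorem binary_prefix_mono (s : List Bool) (ℓ : ℕ) (hℓ : 1 ≤ ℓ) :
    bp ℓ s <+: bp (ℓ - 1) s := by
  classical
  set g : ℕ → List Bool × ℕ := fun m => bF (s ++ List.replicate m true) with hg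
  have hstep : ∀ m, g (m+1) = bstep (g m) true := fun m => bF_snoc_true s m
  have hbe : ∀ m, be (s ++ List.replicate m true) = (g m).2 := fun _ => rfl
  have hbf : ∀ m, bf (s ++ List.replicate m true) = (g m).1 := fun _ => rfl
  have hg0 : g 0 = bF s := by simp [hg]
  have hes : be s = (g 0).2 := by rw [hg0]; rfl
  -- step dichotomy for second component
  have hmono : ∀ m, (g (m+1)).2 = (g m).2 ∨ (g (m+1)).2 = (g m).2 + 1 := by
    intro m
    by_cases h : (g m).1.getLast? = some true
    · right
      rw [hstep m]
      exact (bstep_last_true (g m).1 (g m).2 h).2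
    · left
      rw [hstep m, bstep_last_not_true _ _ h]
  -- growth: within two steps the error count increases
  have htwo : ∀ m, (g m).2 + 1 ≤ (g (m+2)).2 := by
    intro m
    by_cases h : (g m).1.getLast? = some true
    · have h1 : (g (m+1)).2 = (g m).2 + 1 := by
        rw [hstep m]; exact (bstep_last_true _ _ h).2
      have e2 : m+1+1 = m+2 := rfl
      rcases hmono (m+1) with h2 | h2 <;> rw [e2] at h2 <;> omega
    · have h1 : g (m+1) = ((g m).1 ++ [true], (g m).2) := by
        rw [hstep m, bstep_last_not_true _ _ h]
      have h2 : (g (m+1)).1.getLast? = some true := by rw [h1]; simp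
      have h3 : (g (m+2)).2 = (g (m+1)).2 + 1 := by
        rw [show m+2 = (m+1)+1 from rfl, hstep (m+1)]; exact (bstep_last_true _ _ h2).2
      rw [h3, h1]
  have hgrow : ∀ k, (g 0).2 + k ≤ (g (2*k)).2 := by
    intro k
    induction k with
    | zero => simp
    | succ k ih =>
      have := htwo (2*k)
      have h2 : 2 * (k+1) = 2*k + 2 := by ring
      rw [h2]; omega
  -- every value ≥ (g 0).2 is attained
  have hattain : ∀ c, (g 0).2 ≤ c → ∃ m, (g m).2 = c := by
    intro c hc
    obtain ⟨m, _, hm⟩ := nat_ivt (fun m => (g m).2) hmono c hc (2 * (c - (g 0).2))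
      (le_trans (by omega) (hgrow (c - (g 0).2)))
    exact ⟨m, hm⟩
  -- the sets
  set S : ℕ → Set ℕ := fun ℓ' => {m : ℕ | be (s ++ List.replicate m true) = be s + ℓ' ∨
      bf (s ++ List.replicate m true) = []} with hS
  have hSmem : ∀ ℓ' m, m ∈ S ℓ' ↔ ((g m).2 = (g 0).2 + ℓ' ∨ (g m).1 = []) := by
    intro ℓ' m
    rw [hS]
    simp only [Set.mem_setOf_eq, hbe, hbf, hes]
  have hSne : ∀ ℓ', (S ℓ').Nonempty := by
    intro ℓ'
    obtain ⟨m, hm⟩ := hattain ((g 0).2 + ℓ') (by omega)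
    exact ⟨m, (hSmem ℓ' m).mpr (Or.inl hm)⟩
  have hbp : ∀ ℓ', bp ℓ' s = (g (sInf (S ℓ'))).1 := fun ℓ' => rfl
  set m0 := sInf (S (ℓ - 1)) with hm0
  set m1 := sInf (S ℓ) with hm1
  have hm0mem : m0 ∈ S (ℓ - 1) := Nat.sInf_mem (hSne _)
  have hm1mem : m1 ∈ S ℓ := Nat.sInf_mem (hSne _)
  rw [hbp, hbp, ← hm0, ← hm1]
  -- case: g m0 is empty
  by_cases hemp : (g m0).1 = []
  · have : m1 ≤ m0 := Nat.sInf_le ((hSmem ℓ m0).mpr (Or.inr hemp))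
    have hle : m0 ≤ m1 := by
      rcases (hSmem ℓ m1).mp hm1mem with h | h
      · have h0 : (g 0).2 ≤ (g 0).2 + (ℓ - 1) := by omega
        have h2 : (g 0).2 + (ℓ - 1) ≤ (g m1).2 := by omega
        obtain ⟨m, hm, hma⟩ := nat_ivt (fun m => (g m).2) hmono ((g 0).2 + (ℓ-1)) h0 m1 h2
        exact le_trans (Nat.sInf_le ((hSmem (ℓ-1) m).mpr (Or.inl hma))) hm
      · exact Nat.sInf_le ((hSmem (ℓ-1) m1).mpr (Or.inr h))
    have : m0 = m1 := le_antisymm hle this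
    rw [this]
  · -- g m0 is nonempty, so m0 ∈ S(ℓ-1) via the value condition
    have hv0 : (g m0).2 = (g 0).2 + (ℓ - 1) := by
      rcases (hSmem _ _).mp hm0mem with h | h
      · exact h
      · exact absurd h hemp
    have hle : m0 ≤ m1 := by
      rcases (hSmem ℓ m1).mp hm1mem with h | h
      · have h0 : (g 0).2 ≤ (g 0).2 + (ℓ - 1) := by omega
        have h2 : (g 0).2 + (ℓ - 1) ≤ (g m1).2 := by omega
        obtain ⟨m, hm, hma⟩ := nat_ivt (fun m => (g m).2) hmono ((g 0).2 + (ℓ-1)) h0 m1 h2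
        exact le_trans (Nat.sInf_le ((hSmem (ℓ-1) m).mpr (Or.inl hma))) hm
      · exact Nat.sInf_le ((hSmem (ℓ-1) m1).mpr (Or.inr h))
    rcases eq_or_lt_of_le hle with heq | hlt
    · rw [heq]
    · -- m0 < m1
      by_cases hlast : (g m0).1.getLast? = some true
      · -- one more step reaches S ℓ
        obtain ⟨hpre, hval⟩ := bstep_last_true (g m0).1 (g m0).2 hlast
        have hv1 : (g (m0+1)).2 = (g 0).2 + ℓ := by
          rw [hstep m0, hval, hv0]; omega
        have hmem : m0 + 1 ∈ S ℓ := (hSmem ℓ (m0+1)).mpr (Or.inl hv1)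
        have : m1 = m0 + 1 := le_antisymm (Nat.sInf_le hmem) hlt
        rw [this, hstep m0]
        exact hpre
      · -- append step, then error step
        have h1 : g (m0+1) = ((g m0).1 ++ [true], (g m0).2) :=
          by rw [hstep m0, bstep_last_not_true _ _ hlast]
        have hnot1 : m0 + 1 ∉ S ℓ := by
          rw [hSmem]
          push_neg
          constructor
          · rw [h1]; simp only; omega
          · rw [h1]; simp
        have hlt2 : m0 + 2 ≤ m1 := by
          rcases Nat.lt_or_ge m1 (m0+2) with h | h
          · have : m1 = m0 + 1 := by omega
            exact absurd (this ▸ hm1mem) hnot1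
          · exact h
        have h2 : (g (m0+1)).1.getLast? = some true := by rw [h1]; simp
        obtain ⟨hpre, hval⟩ := bstep_last_true (g (m0+1)).1 (g (m0+1)).2 h2
        have hv2 : (g (m0+2)).2 = (g 0).2 + ℓ := by
          have : (g (m0+1)).2 = (g m0).2 := by rw [h1]
          rw [show m0+2 = (m0+1)+1 from rfl, hstep (m0+1), hval, this, hv0]; omega
        have hmem : m0 + 2 ∈ S ℓ := (hSmem ℓ (m0+2)).mpr (Or.inl hv2)
        have hm1eq : m1 = m0 + 2 := le_antisymm (Nat.sInf_le hmem) hlt2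
        have hpre2 : (g (m0+2)).1 <+: (g m0).1 := by
          rw [show m0+2 = (m0+1)+1 from rfl, hstep (m0+1), h1]
          exact bstep_snoc _ _
        rw [hm1eq]
        exact hpre2
end
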